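/- Let n ≥ 4 and define ψ_n(α) = (1/(2^{n-2} Γ(n/2)²)) ∫₀¹ (1-t²)^{(n-2)/2} [∫₀^∞∫₀^∞ exp(-(r² + r'² - 2rr't α)/2) (rr')^{n-2} dr dr'] dt. Then there exist constants 0 < a ≤ b, depending only on n, such that a · (1-α)^{-(n-3)/2} ≤ ψ_n(α) ≤ b · (1-α)^{-(n-3)/2} for all α ∈ [-1, 1). -/

import Mathlib

open MeasureTheory Real

/-- The mixing density `ψ_n(α)`. -/
noncomputable def psi (n : ℕ) (α : ℝ) : ℝ :=
  (1 / (2 ^ ((n : ℝ) - 2) * Real.Gamma ((n : ℝ) / 2) ^ 2)) *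
    ∫ t in Set.Ioo (0 : ℝ) 1,
      (1 - t ^ 2) ^ (((n : ℝ) - 2) / 2) *
        ∫ r in Set.Ioi (0 : ℝ), ∫ r' in Set.Ioi (0 : ℝ),
          Real.exp (-(r ^ 2 + r' ^ 2 - 2 * r * r' * t * α) / 2) * (r * r') ^ ((n : ℝ) - 2)

/-!
Write `p = n - 2`. Then `ψ_n(α)` is a constant times `∫₀¹ (1 - t²)^{p/2} K(tα) dt`, where
`K(c) = ∫∫ exp(-(r² + r'² - 2rr'c)/2) (rr')^p dr dr'` is the radial kernel, and the exponent equals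
`-(r - r')²/2 - (1 - c) r r'`.

The kernel satisfies `K(c) ≍ (1 - c)^{-(p + 1/2)}` on `[-1, 1)`. For the upper bound,
`(rr')^p e^{-(1-c)rr'/2} ≤ p! (2/(1-c))^p` absorbs the polynomial factor, and completing the square
leaves a Gaussian in `r'` times `exp(-(1-c) r²/4)`. For the lower bound, the integrand is at least
`e^{-17/2} (1-c)^{-p}` on the box `r ∈ (1/√(1-c), 2/√(1-c))`, `r' ∈ (r, r + 1)`, whose area is
`(1-c)^{-1/2}`.

For the `t`-integral, `1 - t² ≤ 2(1 - tα)` and `1 - tα` is comparable to `(1 - t) + (1 - α)`.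
Since `p > 1`, the upper bound is then
`∫₀¹ (s + 1 - α)^{-(p+1)/2} ds ≤ 2/(p - 1) · (1 - α)^{-(p-1)/2}`.
The lower bound comes from the range `1 - t ∈ ((1-α)/4, (1-α)/2)`.
-/

open Set

theorem pow_mul_exp_neg_mul_le (k : ℕ) {a x : ℝ} (ha : 0 < a) (hx : 0 ≤ x) :
    x ^ k * exp (-(a * x)) ≤ k.factorial / a ^ k := by
  have h := pow_div_factorial_le_exp (a * x) (by positivity) k
  rw [div_le_iff₀ (by positivity)] at h
  rw [le_div_iff₀ (by positivity), exp_neg]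
  calc x ^ k * (exp (a * x))⁻¹ * a ^ k = (a * x) ^ k * (exp (a * x))⁻¹ := by ring
    _ ≤ exp (a * x) * k.factorial * (exp (a * x))⁻¹ := by gcongr
    _ = k.factorial := by field_simp

theorem mul_sub_le_setIntegral {f : ℝ → ℝ} {s : Set ℝ} {a b m : ℝ} (hab : a ≤ b)
    (hs : MeasurableSet s) (hsub : Ioo a b ⊆ s) (hf : IntegrableOn f s) (hf0 : ∀ x ∈ s, 0 ≤ f x)
    (hm : ∀ x ∈ Ioo a b, m ≤ f x) : m * (b - a) ≤ ∫ x in s, f x :=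
  calc m * (b - a) = ∫ _ in Ioo a b, m := by
        rw [setIntegral_const, volume_real_Ioo_of_le hab, smul_eq_mul, mul_comm]
    _ ≤ ∫ x in Ioo a b, f x :=
        setIntegral_mono_on (integrableOn_const measure_Ioo_lt_top.ne) (hf.mono_set hsub)
          measurableSet_Ioo hm
    _ ≤ ∫ x in s, f x :=
        setIntegral_mono_set hf ((ae_restrict_iff' hs).2 (Filter.Eventually.of_forall hf0))
          hsub.eventuallyLE

theorem integrable_exp_neg_half_sq_sub (a : ℝ) :
    Integrable fun x : ℝ => exp (-(1 / 2) * (x - a) ^ 2) :=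
  (integrable_exp_neg_mul_sq (by norm_num)).comp_sub_right a

theorem integral_exp_neg_half_sq_sub (a : ℝ) :
    ∫ x : ℝ, exp (-(1 / 2) * (x - a) ^ 2) = √(2 * π) := by
  rw [integral_sub_right_eq_self (fun x => exp (-(1 / 2) * x ^ 2)) a, integral_gaussian]
  ring_nf

theorem integrableOn_one_sub_add_rpow {D : ℝ} (hD : 0 < D) (q : ℝ) :
    IntegrableOn (fun t : ℝ => (1 - t + D) ^ q) (Ioo 0 1) := by
  refine (ContinuousOn.integrableOn_Icc ?_).mono_set Ioo_subset_Icc_self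
  exact ContinuousOn.rpow_const (by fun_prop) fun t ht => Or.inl (by linarith [ht.2])

theorem integral_one_sub_add_rpow_neg_le {q D : ℝ} (hq : 1 < q) (hD : 0 < D) :
    ∫ t in Ioo 0 1, (1 - t + D) ^ (-q) ≤ D ^ (1 - q) / (q - 1) := by
  have h0 : (0 : ℝ) ∉ uIcc D (1 + D) := by
    rw [uIcc_of_le (by linarith)]; exact fun h => absurd h.1 (not_le.2 hD)
  rw [← integral_Ioc_eq_integral_Ioo, ← intervalIntegral.integral_of_le zero_le_one]
  simp_rw [show ∀ t : ℝ, 1 - t + D = 1 + D - t from fun t => by ring]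
  rw [intervalIntegral.integral_comp_sub_left (fun x => x ^ (-q)), sub_zero, add_sub_cancel_left,
    integral_rpow (Or.inr ⟨by linarith, h0⟩), show -q + 1 = -(q - 1) by ring,
    show 1 - q = -(q - 1) by ring, div_neg, ← neg_div, neg_sub]
  have : 0 ≤ (1 + D) ^ (-(q - 1)) := by positivity
  exact div_le_div_of_nonneg_right (by linarith) (by linarith)

noncomputable def radialIntegrand (p c r r' : ℝ) : ℝ :=
  exp (-(r ^ 2 + r' ^ 2 - 2 * r * r' * c) / 2) * (r * r') ^ p

noncomputable def radialKernel (p c : ℝ) : ℝ :=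
  ∫ r in Ioi 0, ∫ r' in Ioi 0, radialIntegrand p c r r'

theorem radialIntegrand_nonneg (p c : ℝ) {r r' : ℝ} (hr : 0 ≤ r) (hr' : 0 ≤ r') :
    0 ≤ radialIntegrand p c r r' :=
  mul_nonneg (exp_pos _).le (rpow_nonneg (mul_nonneg hr hr') _)

theorem stronglyMeasurable_integral_radialIntegrand (p : ℝ) :
    StronglyMeasurable fun q : ℝ × ℝ => ∫ r' in Ioi 0, radialIntegrand p q.1 q.2 r' := by
  have h : Measurable fun z : (ℝ × ℝ) × ℝ => radialIntegrand p z.1.1 z.1.2 z.2 := by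
    unfold radialIntegrand; fun_prop
  exact h.stronglyMeasurable.integral_prod_right'

theorem stronglyMeasurable_radialKernel (p : ℝ) : StronglyMeasurable (radialKernel p) :=
  (stronglyMeasurable_integral_radialIntegrand p).integral_prod_right'

section UpperBound

variable {k : ℕ} {ε r : ℝ}

theorem radialIntegrand_le (hε : 0 < ε) (hε2 : ε ≤ 2) (hr : 0 ≤ r) {r' : ℝ} (hr' : 0 ≤ r') :
    radialIntegrand k (1 - ε) r r' ≤
      k.factorial / (ε / 2) ^ k * exp (-(ε / 4) * r ^ 2) *
        exp (-(1 / 2) * (r' - r * (1 - ε / 2)) ^ 2) := by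
  have hsplit : exp (-(r ^ 2 + r' ^ 2 - 2 * r * r' * (1 - ε)) / 2) =
      exp (-(ε / 2 * (r * r'))) * exp (-((ε - ε ^ 2 / 4) / 2) * r ^ 2) *
        exp (-(1 / 2) * (r' - r * (1 - ε / 2)) ^ 2) := by
    rw [← exp_add, ← exp_add]; ring_nf
  have hr2 : -((ε - ε ^ 2 / 4) / 2) * r ^ 2 ≤ -(ε / 4) * r ^ 2 := by
    nlinarith [mul_nonneg (mul_nonneg hε.le (sub_nonneg.2 hε2)) (sq_nonneg r)]
  calc radialIntegrand k (1 - ε) r r'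
      = (r * r') ^ k * exp (-(ε / 2 * (r * r'))) * exp (-((ε - ε ^ 2 / 4) / 2) * r ^ 2) *
          exp (-(1 / 2) * (r' - r * (1 - ε / 2)) ^ 2) := by
        rw [radialIntegrand, rpow_natCast, hsplit]; ring
    _ ≤ _ := by
        gcongr
        exact pow_mul_exp_neg_mul_le k (by positivity) (mul_nonneg hr hr')

theorem integrableOn_radialIntegrand (hε : 0 < ε) (hε2 : ε ≤ 2) (hr : 0 ≤ r) :
    IntegrableOn (radialIntegrand k (1 - ε) r) (Ioi 0) := by
  refine Integrable.mono' ((integrable_exp_neg_half_sq_sub (r * (1 - ε / 2))).const_mul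
    (k.factorial / (ε / 2) ^ k * exp (-(ε / 4) * r ^ 2))).integrableOn
    (by unfold radialIntegrand; fun_prop : Measurable _).aestronglyMeasurable ?_
  filter_upwards [ae_restrict_mem measurableSet_Ioi] with r' hr'
  rw [norm_of_nonneg (radialIntegrand_nonneg _ _ hr hr'.le)]
  exact radialIntegrand_le hε hε2 hr hr'.le

theorem integral_radialIntegrand_le (hε : 0 < ε) (hε2 : ε ≤ 2) (hr : 0 ≤ r) :
    ∫ r' in Ioi 0, radialIntegrand k (1 - ε) r r' ≤
      k.factorial / (ε / 2) ^ k * √(2 * π) * exp (-(ε / 4) * r ^ 2) := by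
  set a := r * (1 - ε / 2)
  calc ∫ r' in Ioi 0, radialIntegrand k (1 - ε) r r'
      ≤ ∫ r' in Ioi 0, k.factorial / (ε / 2) ^ k * exp (-(ε / 4) * r ^ 2) *
          exp (-(1 / 2) * (r' - a) ^ 2) := by
        refine setIntegral_mono_on (integrableOn_radialIntegrand hε hε2 hr)
          ((integrable_exp_neg_half_sq_sub a).const_mul _).integrableOn measurableSet_Ioi
          fun r' hr' => radialIntegrand_le hε hε2 hr (le_of_lt hr')
    _ ≤ ∫ r', k.factorial / (ε / 2) ^ k * exp (-(ε / 4) * r ^ 2) *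
          exp (-(1 / 2) * (r' - a) ^ 2) :=
        setIntegral_le_integral ((integrable_exp_neg_half_sq_sub a).const_mul _)
          (Filter.Eventually.of_forall fun _ => by positivity)
    _ = _ := by rw [integral_const_mul, integral_exp_neg_half_sq_sub]; ring

theorem integrableOn_integral_radialIntegrand (hε : 0 < ε) (hε2 : ε ≤ 2) :
    IntegrableOn (fun r => ∫ r' in Ioi 0, radialIntegrand k (1 - ε) r r') (Ioi 0) := by
  refine Integrable.mono' ((integrable_exp_neg_mul_sq (b := ε / 4) (by positivity)).const_mul
    (k.factorial / (ε / 2) ^ k * √(2 * π))).integrableOn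
    ((stronglyMeasurable_integral_radialIntegrand _).comp_measurable
      (measurable_const.prodMk measurable_id)).aestronglyMeasurable ?_
  filter_upwards [ae_restrict_mem measurableSet_Ioi] with r hr
  rw [norm_of_nonneg (setIntegral_nonneg measurableSet_Ioi
    fun r' hr' => radialIntegrand_nonneg _ _ (le_of_lt hr) (le_of_lt hr'))]
  exact integral_radialIntegrand_le hε hε2 (le_of_lt hr)

theorem radialKernel_le {c : ℝ} (hc : c ∈ Ico (-1) 1) :
    radialKernel k c ≤ 2 ^ k * k.factorial * √(2 * π) * √π * (1 - c) ^ (-((k : ℝ) + 1 / 2)) := by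
  obtain ⟨ε, hε, hε2, rfl⟩ : ∃ ε, 0 < ε ∧ ε ≤ 2 ∧ c = 1 - ε :=
    ⟨1 - c, by linarith [hc.2], by linarith [hc.1], by ring⟩
  rw [sub_sub_cancel]
  calc radialKernel k (1 - ε)
      ≤ ∫ r in Ioi 0, k.factorial / (ε / 2) ^ k * √(2 * π) * exp (-(ε / 4) * r ^ 2) :=
        setIntegral_mono_on (integrableOn_integral_radialIntegrand hε hε2)
          ((integrable_exp_neg_mul_sq (by positivity)).const_mul _).integrableOn measurableSet_Ioi
          fun r hr => integral_radialIntegrand_le hε hε2 (le_of_lt hr)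
    _ = k.factorial / (ε / 2) ^ k * √(2 * π) * (√(π / (ε / 4)) / 2) := by
        rw [integral_const_mul, integral_gaussian_Ioi]
    _ = _ := by
        rw [show π / (ε / 4) = (2 * √π / √ε) ^ 2 by
          rw [div_pow, mul_pow, sq_sqrt pi_pos.le, sq_sqrt hε.le]; ring]
        rw [sqrt_sq (by positivity), rpow_neg hε.le, rpow_add hε, rpow_natCast,
          ← sqrt_eq_rpow, div_pow]
        field_simp

end UpperBound

section LowerBound

variable {k : ℕ}

theorem exp_mul_le_radialIntegrand {s r r' : ℝ} (hs : 0 < s) (hs2 : s ≤ 2)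
    (hr : r ∈ Ioo (1 / s) (2 / s)) (hr' : r' ∈ Ioo r (r + 1)) :
    exp (-17 / 2) * ((s ^ 2) ^ k)⁻¹ ≤ radialIntegrand k (1 - s ^ 2) r r' := by
  obtain ⟨hrs1, hrs2⟩ : 1 < r * s ∧ r * s < 2 :=
    ⟨(div_lt_iff₀ hs).1 hr.1, (lt_div_iff₀ hs).1 hr.2⟩
  have hr0 : 0 < r := by nlinarith
  -- on this box `(r' - r)² < 1` and `s² r r' = (r s) (r' s) < 2 · 4`
  have hexp : -17 / 2 ≤ -(r ^ 2 + r' ^ 2 - 2 * r * r' * (1 - s ^ 2)) / 2 := by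
    have hr's : r' * s < r * s + s := by nlinarith [hr'.2]
    nlinarith [hr'.1, hr'.2, mul_lt_mul'' hrs2 (hr's.trans_le (by linarith : r * s + s ≤ 4))
      (by positivity) (by nlinarith [hr'.1])]
  have hpow : (s ^ 2)⁻¹ ≤ r * r' := by
    have hrr' : r * r * s ^ 2 ≤ r * r' * s ^ 2 := by gcongr; exact hr'.1.le
    rw [inv_le_iff_one_le_mul₀ (by positivity)]
    nlinarith
  rw [radialIntegrand, rpow_natCast, ← inv_pow]
  exact mul_le_mul (exp_le_exp.2 hexp) (pow_le_pow_left₀ (by positivity) hpow k)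
    (by positivity) (exp_pos _).le

theorem exp_mul_le_radialKernel {c : ℝ} (hc : c ∈ Ico (-1) 1) :
    exp (-17 / 2) * (1 - c) ^ (-((k : ℝ) + 1 / 2)) ≤ radialKernel k c := by
  obtain ⟨s, hs, hs2, rfl⟩ : ∃ s, 0 < s ∧ s ≤ 2 ∧ c = 1 - s ^ 2 :=
    ⟨√(1 - c), sqrt_pos.2 (by linarith [hc.2]),
      sqrt_le_iff.2 ⟨by norm_num, by linarith [hc.1]⟩, by rw [sq_sqrt (by linarith [hc.2])]; ring⟩
  have hε : 0 < s ^ 2 := by positivity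
  have hε2 : s ^ 2 ≤ 2 := by nlinarith [hc.1]
  have hinner : ∀ r ∈ Ioo (1 / s) (2 / s),
      exp (-17 / 2) * ((s ^ 2) ^ k)⁻¹ ≤ ∫ r' in Ioi 0, radialIntegrand k (1 - s ^ 2) r r' := by
    intro r hr
    have hr0 : 0 < r := lt_trans (by positivity) hr.1
    simpa using mul_sub_le_setIntegral (by linarith) measurableSet_Ioi
      (fun x hx => lt_trans hr0 hx.1) (integrableOn_radialIntegrand hε hε2 hr0.le)
      (fun r' hr' => radialIntegrand_nonneg _ _ hr0.le (le_of_lt hr'))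
      fun r' hr' => exp_mul_le_radialIntegrand hs hs2 hr hr'
  have houter := mul_sub_le_setIntegral (by gcongr; norm_num) measurableSet_Ioi
    (fun x hx => lt_trans (by positivity) hx.1) (integrableOn_integral_radialIntegrand hε hε2)
    (fun r hr => setIntegral_nonneg measurableSet_Ioi
      fun r' hr' => radialIntegrand_nonneg _ _ (le_of_lt hr) (le_of_lt hr')) hinner
  refine (le_of_eq ?_).trans houter
  rw [sub_sub_cancel, rpow_neg hε.le, rpow_add hε, rpow_natCast, ← sqrt_eq_rpow,
    sqrt_sq hs.le]
  field_simp
  ring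

end LowerBound

noncomputable def mixingIntegrand (p : ℝ) (K : ℝ → ℝ) (α t : ℝ) : ℝ :=
  (1 - t ^ 2) ^ (p / 2) * K (t * α)

section

variable {p A B α : ℝ} {K : ℝ → ℝ}

theorem mul_mem_Ico_of_mem_Ioo {t : ℝ} (ht : t ∈ Ioo 0 1) (hα : α ∈ Ico (-1) 1) :
    t * α ∈ Ico (-1) 1 :=
  ⟨by nlinarith [ht.1, ht.2, hα.1], by nlinarith [ht.1, ht.2, hα.2]⟩

theorem nonneg_of_forall_le_mul_rpow (hK0 : ∀ c ∈ Ico (-1) 1, 0 ≤ K c)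
    (hKB : ∀ c ∈ Ico (-1) 1, K c ≤ B * (1 - c) ^ (-(p + 1 / 2))) : 0 ≤ B := by
  have h0 : (0 : ℝ) ∈ Ico (-1) 1 := ⟨by norm_num, by norm_num⟩
  simpa using (hK0 0 h0).trans (hKB 0 h0)

theorem mixingIntegrand_nonneg (hK0 : ∀ c ∈ Ico (-1) 1, 0 ≤ K c) (hα : α ∈ Ico (-1) 1) {t : ℝ}
    (ht : t ∈ Ioo 0 1) : 0 ≤ mixingIntegrand p K α t :=
  mul_nonneg (rpow_nonneg (by nlinarith [ht.1, ht.2]) _) (hK0 _ (mul_mem_Ico_of_mem_Ioo ht hα))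

theorem mixingIntegrand_le (hp : 0 ≤ p) (hK0 : ∀ c ∈ Ico (-1) 1, 0 ≤ K c)
    (hKB : ∀ c ∈ Ico (-1) 1, K c ≤ B * (1 - c) ^ (-(p + 1 / 2))) (hα : α ∈ Ico (-1) 1) {t : ℝ}
    (ht : t ∈ Ioo 0 1) :
    mixingIntegrand p K α t ≤
      B * 2 ^ (p / 2) * 3 ^ ((p + 1) / 2) * (1 - t + (1 - α)) ^ (-((p + 1) / 2)) := by
  have hB := nonneg_of_forall_le_mul_rpow hK0 hKB
  obtain ⟨ht0, ht1⟩ := ht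
  obtain ⟨hα1, hα2⟩ := hα
  set u := 1 - t * α
  have hu : 0 < u := by nlinarith
  have hweight : 1 - t ^ 2 ≤ 2 * u := by nlinarith [sq_nonneg (1 - t)]
  -- `u = (1 - t) + t (1 - α)`, which dominates a third of `(1 - t) + (1 - α)`
  have hu3 : (1 - t + (1 - α)) * 3⁻¹ ≤ u := by
    nlinarith [mul_pos ht0 (sub_pos.2 hα2),
      mul_nonneg (sub_nonneg.2 ht1.le) (neg_le_iff_add_nonneg.1 hα1)]
  have hmem := mul_mem_Ico_of_mem_Ioo ⟨ht0, ht1⟩ ⟨hα1, hα2⟩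
  calc mixingIntegrand p K α t ≤ (2 * u) ^ (p / 2) * (B * u ^ (-(p + 1 / 2))) :=
        mul_le_mul (rpow_le_rpow (by nlinarith) hweight (by positivity)) (hKB _ hmem) (hK0 _ hmem)
          (by positivity)
    _ = B * 2 ^ (p / 2) * u ^ (-((p + 1) / 2)) := by
        rw [mul_rpow zero_le_two hu.le, show -((p + 1) / 2) = p / 2 + -(p + 1 / 2) by ring,
          rpow_add hu]
        ring
    _ ≤ B * 2 ^ (p / 2) * ((1 - t + (1 - α)) * 3⁻¹) ^ (-((p + 1) / 2)) :=
        mul_le_mul_of_nonneg_left (rpow_le_rpow_of_nonpos (by positivity) hu3 (by linarith))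
          (by positivity)
    _ = _ := by
        rw [mul_rpow (by linarith) (by norm_num), inv_rpow (by norm_num), ← rpow_neg (by norm_num),
          neg_neg]
        ring

theorem integrableOn_mixingIntegrand (hp : 0 ≤ p) (hK : Measurable K)
    (hK0 : ∀ c ∈ Ico (-1) 1, 0 ≤ K c)
    (hKB : ∀ c ∈ Ico (-1) 1, K c ≤ B * (1 - c) ^ (-(p + 1 / 2))) (hα : α ∈ Ico (-1) 1) :
    IntegrableOn (mixingIntegrand p K α) (Ioo 0 1) := by
  have hD : 0 < 1 - α := by linarith [hα.2]
  refine Integrable.mono' ((integrableOn_one_sub_add_rpow hD (-((p + 1) / 2))).const_mul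
    (B * 2 ^ (p / 2) * 3 ^ ((p + 1) / 2)))
    (by unfold mixingIntegrand; fun_prop : Measurable _).aestronglyMeasurable ?_
  filter_upwards [ae_restrict_mem measurableSet_Ioo] with t ht
  rw [norm_of_nonneg (mixingIntegrand_nonneg hK0 hα ht)]
  exact mixingIntegrand_le hp hK0 hKB hα ht

theorem integral_mixingIntegrand_le (hp : 1 < p) (hK0 : ∀ c ∈ Ico (-1) 1, 0 ≤ K c)
    (hKB : ∀ c ∈ Ico (-1) 1, K c ≤ B * (1 - c) ^ (-(p + 1 / 2))) (hα : α ∈ Ico (-1) 1) :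
    ∫ t in Ioo 0 1, mixingIntegrand p K α t ≤
      B * 2 ^ (p / 2) * 3 ^ ((p + 1) / 2) * (2 / (p - 1)) * (1 - α) ^ (-(p - 1) / 2) := by
  have hD : 0 < 1 - α := by linarith [hα.2]
  have hB := nonneg_of_forall_le_mul_rpow hK0 hKB
  calc ∫ t in Ioo 0 1, mixingIntegrand p K α t
      ≤ ∫ t in Ioo 0 1,
          B * 2 ^ (p / 2) * 3 ^ ((p + 1) / 2) * (1 - t + (1 - α)) ^ (-((p + 1) / 2)) :=
        integral_mono_of_nonneg
          ((ae_restrict_iff' measurableSet_Ioo).2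
            (.of_forall fun t => mixingIntegrand_nonneg hK0 hα))
          ((integrableOn_one_sub_add_rpow hD _).const_mul _)
          ((ae_restrict_iff' measurableSet_Ioo).2
            (.of_forall fun t => mixingIntegrand_le (by linarith) hK0 hKB hα))
    _ ≤ B * 2 ^ (p / 2) * 3 ^ ((p + 1) / 2) *
          ((1 - α) ^ (1 - (p + 1) / 2) / ((p + 1) / 2 - 1)) := by
        rw [integral_const_mul]
        gcongr
        exact integral_one_sub_add_rpow_neg_le (by linarith) hD
    _ = _ := by
        rw [show 1 - (p + 1) / 2 = -(p - 1) / 2 by ring, show (p + 1) / 2 - 1 = (p - 1) / 2 by ring]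
        field_simp

theorem le_integral_mixingIntegrand (hp : 0 ≤ p) (hA : 0 ≤ A) (hK : Measurable K)
    (hKA : ∀ c ∈ Ico (-1) 1, A * (1 - c) ^ (-(p + 1 / 2)) ≤ K c)
    (hKB : ∀ c ∈ Ico (-1) 1, K c ≤ B * (1 - c) ^ (-(p + 1 / 2))) (hα : α ∈ Ico (-1) 1) :
    A / (4 ^ (p / 2) * 2 ^ (p + 1 / 2) * 4) * (1 - α) ^ (-(p - 1) / 2) ≤
      ∫ t in Ioo 0 1, mixingIntegrand p K α t := by
  obtain ⟨hα1, hα2⟩ := hα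
  set D := 1 - α
  have hD : 0 < D := by linarith
  have hK0 : ∀ c ∈ Ico (-1) 1, 0 ≤ K c := fun c hc =>
    (mul_nonneg hA (rpow_nonneg (by linarith [hc.2]) _)).trans (hKA c hc)
  have hbox : ∀ t ∈ Ioo (1 - D / 2) (1 - D / 4),
      (D / 4) ^ (p / 2) * (A * (2 * D) ^ (-(p + 1 / 2))) ≤ mixingIntegrand p K α t := by
    intro t ht
    have ht01 : t ∈ Ioo 0 1 := ⟨by linarith [ht.1], by linarith [ht.2]⟩
    have hmem := mul_mem_Ico_of_mem_Ioo ht01 ⟨hα1, hα2⟩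
    refine mul_le_mul (rpow_le_rpow (by positivity) (by nlinarith [ht.1, ht.2]) (by positivity))
      ((mul_le_mul_of_nonneg_left (rpow_le_rpow_of_nonpos (by linarith [hmem.2])
        (by nlinarith [ht.1, ht.2]) (by linarith)) hA).trans (hKA _ hmem))
      (by positivity) (rpow_nonneg (by nlinarith [ht01.1, ht01.2]) _)
  have h := mul_sub_le_setIntegral (by linarith) measurableSet_Ioo
    (fun t ht => ⟨by linarith [ht.1], by linarith [ht.2]⟩)
    (integrableOn_mixingIntegrand hp hK hK0 hKB ⟨hα1, hα2⟩)
    (fun t ht => mixingIntegrand_nonneg hK0 ⟨hα1, hα2⟩ ht) hbox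
  refine (le_of_eq ?_).trans h
  have hDpow : D ^ (-(p - 1) / 2) = D ^ (p / 2) * D ^ (-(p + 1 / 2)) * D := by
    rw [← rpow_add hD, ← rpow_add_one hD.ne']; ring_nf
  rw [hDpow, div_rpow hD.le (by norm_num), mul_rpow zero_le_two hD.le, rpow_neg zero_le_two]
  ring

theorem exists_bounds_integral_mixingIntegrand (hp : 1 < p) (hA : 0 < A) (hK : Measurable K)
    (hKAB : ∀ c ∈ Ico (-1) 1,
      A * (1 - c) ^ (-(p + 1 / 2)) ≤ K c ∧ K c ≤ B * (1 - c) ^ (-(p + 1 / 2))) :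
    ∃ a b : ℝ, 0 < a ∧ a ≤ b ∧ ∀ α ∈ Ico (-1 : ℝ) 1,
      a * (1 - α) ^ (-(p - 1) / 2) ≤ ∫ t in Ioo 0 1, mixingIntegrand p K α t ∧
        ∫ t in Ioo 0 1, mixingIntegrand p K α t ≤ b * (1 - α) ^ (-(p - 1) / 2) := by
  have hKA := fun c hc => (hKAB c hc).1
  have hKB := fun c hc => (hKAB c hc).2
  have hK0 : ∀ c ∈ Ico (-1) 1, 0 ≤ K c := fun c hc =>
    (mul_nonneg hA.le (rpow_nonneg (by linarith [hc.2]) _)).trans (hKA c hc)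
  refine ⟨A / (4 ^ (p / 2) * 2 ^ (p + 1 / 2) * 4),
    max (B * 2 ^ (p / 2) * 3 ^ ((p + 1) / 2) * (2 / (p - 1)))
      (A / (4 ^ (p / 2) * 2 ^ (p + 1 / 2) * 4)),
    by positivity, le_max_right _ _, fun α hα =>
      ⟨le_integral_mixingIntegrand (by linarith) hA.le hK hKA hKB hα, ?_⟩⟩
  exact (integral_mixingIntegrand_le hp hK0 hKB hα).trans <|
    mul_le_mul_of_nonneg_right (le_max_left _ _) (rpow_nonneg (by linarith [hα.2]) _)

end

theorem exists_radialKernel_bounds (k : ℕ) :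
    ∃ A B : ℝ, 0 < A ∧ ∀ c ∈ Ico (-1 : ℝ) 1,
      A * (1 - c) ^ (-((k : ℝ) + 1 / 2)) ≤ radialKernel k c ∧
        radialKernel k c ≤ B * (1 - c) ^ (-((k : ℝ) + 1 / 2)) :=
  ⟨_, _, exp_pos _, fun _ hc => ⟨exp_mul_le_radialKernel hc, radialKernel_le hc⟩⟩

theorem exists_pos_psi_eq_mul_integral {n : ℕ} (hn : 0 < n) :
    ∃ C > 0, ∀ α, psi n α =
      C * ∫ t in Ioo 0 1, mixingIntegrand ((n : ℝ) - 2) (radialKernel ((n : ℝ) - 2)) α t := by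
  have := Gamma_pos_of_pos (by positivity : (0 : ℝ) < n / 2)
  refine ⟨1 / (2 ^ ((n : ℝ) - 2) * Gamma ((n : ℝ) / 2) ^ 2), by positivity, fun α => ?_⟩
  simp only [psi, mixingIntegrand, radialKernel, radialIntegrand, mul_assoc]

/-- For `n ≥ 4`, `ψ_n(α) ∼ (1-α)^{-(n-3)/2}` with `n`-dependent constants, on `[-1,1)`. -/
theorem statement7 (n : ℕ) (hn : 4 ≤ n) :
    ∃ a b : ℝ, 0 < a ∧ a ≤ b ∧ ∀ α ∈ Set.Ico (-1 : ℝ) 1,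
      a * (1 - α) ^ (-((n : ℝ) - 3) / 2) ≤ psi n α ∧
        psi n α ≤ b * (1 - α) ^ (-((n : ℝ) - 3) / 2) := by
  have hp : (1 : ℝ) < n - 2 := by
    have : (4 : ℝ) ≤ n := by exact_mod_cast hn
    linarith
  obtain ⟨A, B, hA, hK⟩ := exists_radialKernel_bounds (n - 2)
  rw [Nat.cast_sub (by omega), Nat.cast_ofNat] at hK
  obtain ⟨a, b, ha, hab, hbounds⟩ := exists_bounds_integral_mixingIntegrand hp hA
    (stronglyMeasurable_radialKernel _).measurable hK
  obtain ⟨C, hC, hψ⟩ := exists_pos_psi_eq_mul_integral (by omega : 0 < n)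
  refine ⟨C * a, C * b, mul_pos hC ha, mul_le_mul_of_nonneg_left hab hC.le, fun α hα => ?_⟩
  rw [hψ, show -((n : ℝ) - 3) / 2 = -((n : ℝ) - 2 - 1) / 2 by ring, mul_assoc, mul_assoc]
  exact ⟨mul_le_mul_of_nonneg_left (hbounds α hα).1 hC.le,
    mul_le_mul_of_nonneg_left (hbounds α hα).2 hC.le⟩
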